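/- Let μ be a probability density on ℝᵈ and f = Σ_{u⊆[d]} f_u a decomposition into measurable terms f_u ∈ L²(ℝᵈ,μ) depending only on coordinates in u. If the weak annihilating conditions ∫_ℝ f_u(x_u) μ_u(x_u) dx_i = 0 hold for all i ∈ u (where μ_u is the marginal density on coordinates u), then hierarchical orthogonality holds: ∫_{ℝᵈ} f_u(x_u) f_v(x_v) μ(x) dx = 0 for all v ⊊ u. -/

import Mathlib

open MeasureTheory Finset

/-- Hooker's observation: if the terms of a decomposition satisfy the weak annihilating
conditions `∫ f_u(x_u) μ_u(x_u) dx_i = 0` for all `i ∈ u` (with `μ_u` the marginal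
density), then hierarchical orthogonality `∫ f_u f_v μ = 0` holds for all `v ⊊ u`. -/
theorem weak_annihilation_implies_hierarchical_orthogonality {d : ℕ}
    (μ : (Fin d → ℝ) → ℝ) (hμnn : ∀ x, 0 ≤ μ x) (hμint : Integrable μ)
    (hμprob : ∫ x, μ x = 1)
    (F : Finset (Fin d) → (Fin d → ℝ) → ℝ)
    -- each term depends only on the coordinates in its index set:
    (hdep : ∀ (u : Finset (Fin d)) (x y : Fin d → ℝ),
      (∀ i ∈ u, x i = y i) → F u x = F u y)
    (hFmem : ∀ u, MemLp (F u) 2 (volume.withDensity fun x => ENNReal.ofReal (μ x)))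
    -- the marginal densities:
    (Mu : Finset (Fin d) → (Fin d → ℝ) → ℝ)
    (hMu : ∀ (u : Finset (Fin d)) (x : Fin d → ℝ),
      Mu u x = ∫ y : {i : Fin d // i ∈ uᶜ} → ℝ,
        μ (fun i => if h : i ∈ uᶜ then y ⟨i, h⟩ else x i))
    -- weak annihilating conditions:
    (hann : ∀ (u : Finset (Fin d)), ∀ i ∈ u, ∀ x : Fin d → ℝ,
      ∫ t : ℝ, F u (Function.update x i t) * Mu u (Function.update x i t) = 0)
    -- integrability of products:
    (hint : ∀ u v : Finset (Fin d),
      Integrable (fun x : Fin d → ℝ => F u x * F v x * μ x)) :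
    ∀ u v : Finset (Fin d), v ⊂ u →
      ∫ x : Fin d → ℝ, F u x * F v x * μ x = 0 := by
  classical
  intro u v huv
  obtain ⟨i, hiu, hiv⟩ := Finset.exists_of_ssubset huv
  have hiuc : ¬ (i ∈ uᶜ) := by simp [hiu]
  -- First splitting: coordinates in `uᶜ` versus the rest.
  set e1 : (Fin d → ℝ) ≃ᵐ ({j : Fin d // j ∈ uᶜ} → ℝ) × ({j : Fin d // ¬ j ∈ uᶜ} → ℝ) :=
    MeasurableEquiv.piEquivPiSubtypeProd (fun _ : Fin d => ℝ) (fun j => j ∈ uᶜ) with he1def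
  have hmp1 : MeasurePreserving e1.symm volume volume := by
    have h := (volume_preserving_piEquivPiSubtypeProd (fun _ : Fin d => ℝ) (fun j => j ∈ uᶜ)).symm
    convert h using 4
    all_goals rfl
  set c : ({j : Fin d // ¬ j ∈ uᶜ} → ℝ) → (Fin d → ℝ) :=
    fun b => e1.symm (fun _ => 0, b) with hc
  have he1symm : ∀ (a : {j : Fin d // j ∈ uᶜ} → ℝ) (b : {j : Fin d // ¬ j ∈ uᶜ} → ℝ)
      (j : Fin d), e1.symm (a, b) j = if h : j ∈ uᶜ then a ⟨j, h⟩ else b ⟨j, h⟩ := by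
    intro a b j
    simp [he1def, MeasurableEquiv.piEquivPiSubtypeProd_symm_apply]
  -- Step 1: rewrite the integral over the product space.
  have key1 : (∫ x : Fin d → ℝ, F u x * F v x * μ x)
      = ∫ z : ({j : Fin d // j ∈ uᶜ} → ℝ) × ({j : Fin d // ¬ j ∈ uᶜ} → ℝ),
          F u (e1.symm z) * F v (e1.symm z) * μ (e1.symm z) :=
    (hmp1.integral_comp e1.symm.measurableEmbedding _).symm
  have hint1 : Integrable
      (fun z : ({j : Fin d // j ∈ uᶜ} → ℝ) × ({j : Fin d // ¬ j ∈ uᶜ} → ℝ) =>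
        F u (e1.symm z) * F v (e1.symm z) * μ (e1.symm z)) (volume.prod volume) := by
    rw [← Measure.volume_eq_prod]
    exact (hmp1.integrable_comp_emb e1.symm.measurableEmbedding).mpr (hint u v)
  have key2 : (∫ x : Fin d → ℝ, F u x * F v x * μ x)
      = ∫ b : {j : Fin d // ¬ j ∈ uᶜ} → ℝ, ∫ a : {j : Fin d // j ∈ uᶜ} → ℝ,
          F u (e1.symm (a, b)) * F v (e1.symm (a, b)) * μ (e1.symm (a, b)) := by
    rw [key1, Measure.volume_eq_prod, integral_prod_symm _ hint1]
  -- The inner integral equals `F u (c b) * F v (c b) * Mu u (c b)`.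
  have inner1 : ∀ b : {j : Fin d // ¬ j ∈ uᶜ} → ℝ,
      (∫ a : {j : Fin d // j ∈ uᶜ} → ℝ,
        F u (e1.symm (a, b)) * F v (e1.symm (a, b)) * μ (e1.symm (a, b)))
      = F u (c b) * F v (c b) * Mu u (c b) := by
    intro b
    have hcb : ∀ j : Fin d, ¬ j ∈ uᶜ → ∀ a, e1.symm (a, b) j = c b j := by
      intro j hj a
      simp only [hc]
      rw [he1symm, he1symm, dif_neg hj, dif_neg hj]
    have hFu : ∀ a, F u (e1.symm (a, b)) = F u (c b) := by
      intro a
      exact hdep u _ _ (fun j hj => hcb j (by simp [hj]) a)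
    have hFv : ∀ a, F v (e1.symm (a, b)) = F v (c b) := by
      intro a
      exact hdep v _ _ (fun j hj => hcb j (by simp [huv.subset hj]) a)
    have hμc : ∀ a, μ (e1.symm (a, b))
        = μ (fun j => if h : j ∈ uᶜ then a ⟨j, h⟩ else c b j) := by
      intro a
      congr 1
      funext j
      by_cases h : j ∈ uᶜ
      · rw [he1symm, dif_pos h, dif_pos h]
      · simp only [hc]
        rw [he1symm, dif_neg h, dif_neg h, he1symm, dif_neg h]
    calc (∫ a : {j : Fin d // j ∈ uᶜ} → ℝ,
          F u (e1.symm (a, b)) * F v (e1.symm (a, b)) * μ (e1.symm (a, b)))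
        = ∫ a : {j : Fin d // j ∈ uᶜ} → ℝ,
            (F u (c b) * F v (c b)) * μ (fun j => if h : j ∈ uᶜ then a ⟨j, h⟩ else c b j) := by
          refine integral_congr_ae (Filter.Eventually.of_forall fun a => ?_)
          dsimp only
          rw [hFu, hFv, hμc]
      _ = (F u (c b) * F v (c b)) * ∫ a : {j : Fin d // j ∈ uᶜ} → ℝ,
            μ (fun j => if h : j ∈ uᶜ then a ⟨j, h⟩ else c b j) := integral_const_mul _ _
      _ = F u (c b) * F v (c b) * Mu u (c b) := by rw [← hMu u (c b)]
  have key3 : (∫ x : Fin d → ℝ, F u x * F v x * μ x)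
      = ∫ b : {j : Fin d // ¬ j ∈ uᶜ} → ℝ, F u (c b) * F v (c b) * Mu u (c b) := by
    rw [key2]
    exact integral_congr_ae (Filter.Eventually.of_forall inner1)
  have hint2 : Integrable
      (fun b : {j : Fin d // ¬ j ∈ uᶜ} → ℝ => F u (c b) * F v (c b) * Mu u (c b)) volume := by
    refine hint1.integral_prod_right.congr (Filter.Eventually.of_forall fun b => ?_)
    exact inner1 b
  -- Second splitting: pull out the coordinate `i` from the remaining coordinates.
  set i₀ : {j : Fin d // ¬ j ∈ uᶜ} := ⟨i, hiuc⟩ with hi₀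
  set e2 : ({j : Fin d // ¬ j ∈ uᶜ} → ℝ)
      ≃ᵐ ({j : {j : Fin d // ¬ j ∈ uᶜ} // j = i₀} → ℝ)
        × ({j : {j : Fin d // ¬ j ∈ uᶜ} // ¬ j = i₀} → ℝ) :=
    MeasurableEquiv.piEquivPiSubtypeProd (fun _ : {j : Fin d // ¬ j ∈ uᶜ} => ℝ)
      (fun j => j = i₀) with he2def
  have hmp2 : MeasurePreserving e2.symm volume volume := by
    have h := (volume_preserving_piEquivPiSubtypeProd (fun _ : {j : Fin d // ¬ j ∈ uᶜ} => ℝ)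
      (fun j => j = i₀)).symm
    convert h using 4
    all_goals rfl
  have he2symm : ∀ (a : {j : {j : Fin d // ¬ j ∈ uᶜ} // j = i₀} → ℝ)
      (b : {j : {j : Fin d // ¬ j ∈ uᶜ} // ¬ j = i₀} → ℝ) (j : {j : Fin d // ¬ j ∈ uᶜ}),
      e2.symm (a, b) j = if h : j = i₀ then a ⟨j, h⟩ else b ⟨j, h⟩ := by
    intro a b j
    simp [he2def, MeasurableEquiv.piEquivPiSubtypeProd_symm_apply]
  have key4 : (∫ b : {j : Fin d // ¬ j ∈ uᶜ} → ℝ, F u (c b) * F v (c b) * Mu u (c b))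
      = ∫ w : ({j : {j : Fin d // ¬ j ∈ uᶜ} // j = i₀} → ℝ)
          × ({j : {j : Fin d // ¬ j ∈ uᶜ} // ¬ j = i₀} → ℝ),
          F u (c (e2.symm w)) * F v (c (e2.symm w)) * Mu u (c (e2.symm w)) :=
    (hmp2.integral_comp e2.symm.measurableEmbedding _).symm
  have hint3 : Integrable
      (fun w : ({j : {j : Fin d // ¬ j ∈ uᶜ} // j = i₀} → ℝ)
          × ({j : {j : Fin d // ¬ j ∈ uᶜ} // ¬ j = i₀} → ℝ) =>
        F u (c (e2.symm w)) * F v (c (e2.symm w)) * Mu u (c (e2.symm w)))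
      (volume.prod volume) := by
    rw [← Measure.volume_eq_prod]
    exact (hmp2.integrable_comp_emb e2.symm.measurableEmbedding).mpr hint2
  have key5 : (∫ b : {j : Fin d // ¬ j ∈ uᶜ} → ℝ, F u (c b) * F v (c b) * Mu u (c b))
      = ∫ b' : {j : {j : Fin d // ¬ j ∈ uᶜ} // ¬ j = i₀} → ℝ,
          ∫ a' : {j : {j : Fin d // ¬ j ∈ uᶜ} // j = i₀} → ℝ,
          F u (c (e2.symm (a', b'))) * F v (c (e2.symm (a', b')))
            * Mu u (c (e2.symm (a', b'))) := by
    rw [key4, Measure.volume_eq_prod, integral_prod_symm _ hint3]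
  -- The update identity.
  have hupd : ∀ (a' : {j : {j : Fin d // ¬ j ∈ uᶜ} // j = i₀} → ℝ)
      (b' : {j : {j : Fin d // ¬ j ∈ uᶜ} // ¬ j = i₀} → ℝ),
      c (e2.symm (a', b'))
        = Function.update (c (e2.symm (fun _ => 0, b'))) i
            (MeasurableEquiv.funUnique {j : {j : Fin d // ¬ j ∈ uᶜ} // j = i₀} ℝ a') := by
    intro a' b'
    funext j
    by_cases hj : j ∈ uᶜ
    · have hji : j ≠ i := fun h => hiuc (by rwa [h] at hj)
      simp only [hc]
      rw [Function.update_of_ne hji, he1symm, dif_pos hj, he1symm, dif_pos hj]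
    · by_cases hji : j = i
      · subst hji
        have hj0 : (⟨j, hj⟩ : {j : Fin d // ¬ j ∈ uᶜ}) = i₀ := by
          rw [hi₀]
        simp only [hc]
        rw [Function.update_self, he1symm, dif_neg hj, he2symm, dif_pos hj0]
        exact congrArg a' (Subsingleton.elim _ _)
      · have hj0 : ¬ ((⟨j, hj⟩ : {j : Fin d // ¬ j ∈ uᶜ}) = i₀) := by
          intro h
          exact hji (congrArg Subtype.val h)
        simp only [hc]
        rw [Function.update_of_ne hji, he1symm, dif_neg hj, he2symm, dif_neg hj0,
          he1symm, dif_neg hj, he2symm, dif_neg hj0]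
  -- The inner integral over the `i`-th coordinate vanishes by the annihilating condition.
  have inner2 : ∀ b' : {j : {j : Fin d // ¬ j ∈ uᶜ} // ¬ j = i₀} → ℝ,
      (∫ a' : {j : {j : Fin d // ¬ j ∈ uᶜ} // j = i₀} → ℝ,
        F u (c (e2.symm (a', b'))) * F v (c (e2.symm (a', b')))
          * Mu u (c (e2.symm (a', b')))) = 0 := by
    intro b'
    set x₀ : Fin d → ℝ := c (e2.symm (fun _ => 0, b')) with hx₀
    have hFv : ∀ t : ℝ, F v (Function.update x₀ i t) = F v x₀ := by
      intro t
      refine hdep v _ _ (fun j hj => ?_)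
      exact Function.update_of_ne (fun h => hiv (by rwa [h] at hj)) _ _
    have hmp3 : MeasurePreserving
        (MeasurableEquiv.funUnique {j : {j : Fin d // ¬ j ∈ uᶜ} // j = i₀} ℝ)
        volume volume := by
      have h := volume_preserving_funUnique {j : {j : Fin d // ¬ j ∈ uᶜ} // j = i₀} ℝ
      convert h using 4
    calc (∫ a' : {j : {j : Fin d // ¬ j ∈ uᶜ} // j = i₀} → ℝ,
          F u (c (e2.symm (a', b'))) * F v (c (e2.symm (a', b')))
            * Mu u (c (e2.symm (a', b'))))
        = ∫ a' : {j : {j : Fin d // ¬ j ∈ uᶜ} // j = i₀} → ℝ,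
            F v x₀ * (F u (Function.update x₀ i
                (MeasurableEquiv.funUnique {j : {j : Fin d // ¬ j ∈ uᶜ} // j = i₀} ℝ a'))
              * Mu u (Function.update x₀ i
                (MeasurableEquiv.funUnique {j : {j : Fin d // ¬ j ∈ uᶜ} // j = i₀} ℝ a'))) := by
          refine integral_congr_ae (Filter.Eventually.of_forall fun a' => ?_)
          dsimp only
          rw [hupd a' b', ← hx₀, hFv]
          ring
      _ = F v x₀ * ∫ a' : {j : {j : Fin d // ¬ j ∈ uᶜ} // j = i₀} → ℝ,
            F u (Function.update x₀ i
                (MeasurableEquiv.funUnique {j : {j : Fin d // ¬ j ∈ uᶜ} // j = i₀} ℝ a'))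
              * Mu u (Function.update x₀ i
                (MeasurableEquiv.funUnique {j : {j : Fin d // ¬ j ∈ uᶜ} // j = i₀} ℝ a'))
            := integral_const_mul _ _
      _ = F v x₀ * ∫ t : ℝ,
            F u (Function.update x₀ i t) * Mu u (Function.update x₀ i t) := by
          congr 1
          exact hmp3.integral_comp
            (MeasurableEquiv.funUnique {j : {j : Fin d // ¬ j ∈ uᶜ} // j = i₀} ℝ).measurableEmbedding
            (fun t : ℝ => F u (Function.update x₀ i t) * Mu u (Function.update x₀ i t))
      _ = F v x₀ * 0 := by rw [hann u i hiu x₀]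
      _ = 0 := mul_zero _
  rw [key3, key5]
  calc (∫ b' : {j : {j : Fin d // ¬ j ∈ uᶜ} // ¬ j = i₀} → ℝ,
        ∫ a' : {j : {j : Fin d // ¬ j ∈ uᶜ} // j = i₀} → ℝ,
        F u (c (e2.symm (a', b'))) * F v (c (e2.symm (a', b')))
          * Mu u (c (e2.symm (a', b'))))
      = ∫ b' : {j : {j : Fin d // ¬ j ∈ uᶜ} // ¬ j = i₀} → ℝ, (0 : ℝ) :=
        integral_congr_ae (Filter.Eventually.of_forall inner2)
    _ = 0 := integral_zero _ _
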